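/- For every state i and every positive integer θ, writing Ê = E_i[min(T_i, θ)], one has 1/Ê − π_i = (π_i/Ê) · Σ_{q ∈ Σ, q ≠ i} P_i(X_θ = q and T_i > θ) · E_q[T_i]. (This is the identity 1/E_i[T̂_i^{(t)}] − π_i = P_i(T_i > θ)·Γ_i / E_i[T̂_i^{(t)}] of the paper, with Γ_i = Σ_{q≠i} P_i(X_θ = q | T_i > θ)(Z_ii − Z_qi) rewritten via the fundamental-matrix identity Z_ii − Z_qi = π_i E_q[T_i].) -/

import Mathlib

/-!
Split the return time at the deterministic time `θ`: on `{T_i ≤ θ}` it equals `min(T_i, θ)`, and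
on `{T_i > θ}` it is `θ` plus the return time of the path shifted by `θ`. The event
`{X_θ = q, T_i > θ}` is decided by the first `θ` steps, so by the Markov property at time `θ` the
image under the shift of `P_i` restricted to it is `P_i(X_θ = q, T_i > θ) • P_q`. Hence
`E_i[T_i] = Ê + Σ_q P_i(X_θ = q, T_i > θ) E_q[T_i]`, where the term `q = i` vanishes because
`θ ≥ 1`, and the identity follows by algebra from `π_i = 1 / E_i[T_i]`. The Markov property is
verified on cylinder sets, a π-system generating the product σ-algebra, where both sides are
products of transition probabilities.
-/

open MeasureTheory ProbabilityTheory Finset Set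
open scoped ENNReal NNReal Classical

namespace LocalStationary

noncomputable section

/-- First return time (≥ 1) of a trajectory `f` to the state `i`, valued in `ℕ∞`
(it equals `⊤` if the trajectory never returns to `i`). -/
def hit {S : Type*} (i : S) (f : ℕ → S) : ℕ∞ :=
  sInf {n : ℕ∞ | ∃ m : ℕ, n = m ∧ 1 ≤ m ∧ f m = i}

/-- Truncated return time `min(T_i, θ)` as a natural number. -/
def truncHit {S : Type*} (i : S) (θ : ℕ) (f : ℕ → S) : ℕ :=
  (min (hit i f) (θ : ℕ∞)).toNat

/-- Number of visits to `j` among the first `min(T_i, θ)` steps of the trajectory. -/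
def visits {S : Type*} (i j : S) (θ : ℕ) (f : ℕ → S) : ℕ :=
  ((Finset.Icc 1 (truncHit i θ f)).filter fun s => f s = j).card

/-- A discrete-time time-homogeneous Markov chain on a state space `S`, described by
the laws `μ x` of its trajectories started at each state `x`, together with its
transition matrix `trans`. -/
structure Chain (S : Type*) [MeasurableSpace S] where
  μ : S → Measure (ℕ → S)
  isProb : ∀ x, IsProbabilityMeasure (μ x)
  start : ∀ x, μ x {f | f 0 = x} = 1
  trans : S → S → ℝ≥0∞
  trans_sum : ∀ x, ∑' y, trans x y = 1
  markov : ∀ x (n : ℕ) (s : ℕ → S),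
    μ x {f | ∀ k ≤ n + 1, f k = s k} =
      μ x {f | ∀ k ≤ n, f k = s k} * trans (s n) (s (n + 1))

namespace Chain

variable {S : Type*} [MeasurableSpace S]

/-- Irreducibility: from every state one can reach every other state. -/
def Irreducible (C : Chain S) : Prop :=
  ∀ x y : S, ∃ n : ℕ, 0 < C.μ x {f | f n = y}

/-- Positive recurrence: the return time to each state is almost surely finite and
has finite expectation. -/
def PositiveRecurrent (C : Chain S) : Prop :=
  ∀ x : S, C.μ x {f | hit x f = ⊤} = 0 ∧
    Integrable (fun f => ((hit x f).toNat : ℝ)) (C.μ x)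

/-- Aperiodicity: for each state, the only common divisor of the possible return
times is `1`. -/
def Aperiodic (C : Chain S) : Prop :=
  ∀ x : S, ∀ d : ℕ, (∀ n : ℕ, 1 ≤ n → 0 < C.μ x {f | f n = x} → d ∣ n) → d ∣ 1

/-- `E_x[T_i]`, the expected hitting time of `i` starting from `x`. -/
def ERet (C : Chain S) (x i : S) : ℝ :=
  ∫ f, ((hit i f).toNat : ℝ) ∂ C.μ x

/-- The stationary probability `π_i = 1 / E_i[T_i]`. -/
def statPi (C : Chain S) (i : S) : ℝ := (C.ERet i i)⁻¹

/-- The truncated mean `E_i[min(T_i, θ)]`. -/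
def EThat (C : Chain S) (i : S) (θ : ℕ) : ℝ :=
  ∫ f, (truncHit i θ f : ℝ) ∂ C.μ i

/-- `E_i[F̂_j] = E_i[Σ_{s=1}^{min(T_i,θ)} 1{X_s = j}]`. -/
def EVisits (C : Chain S) (i j : S) (θ : ℕ) : ℝ :=
  ∫ f, (visits i j θ f : ℝ) ∂ C.μ i

/-- `P_i(T_i > k)`, as a real number. -/
def tailP (C : Chain S) (i : S) (k : ℕ) : ℝ :=
  (C.μ i {f | (k : ℕ∞) < hit i f}).toReal

/-- The maximal hitting time `H_i = max_x E_x[T_i]`. -/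
def maxHit (C : Chain S) (i : S) : ℝ := ⨆ x : S, C.ERet x i

/-- Entry `Z_{jk} = Σ_{t=0}^∞ (P^{(t)}_{jk} − π_k)` of the fundamental matrix. -/
def Zfun (C : Chain S) (j k : S) : ℝ :=
  ∑' t : ℕ, ((C.μ j {f | f t = k}).toReal - C.statPi k)

/-- `Z_max(i) = max_k |Z_{ki}|`. -/
def Zmax (C : Chain S) (i : S) : ℝ := ⨆ k : S, |C.Zfun k i|

end Chain

def shift {S : Type*} (θ : ℕ) (f : ℕ → S) : ℕ → S := fun k => f (θ + k)

section ReturnTime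

variable {S : Type*} {i : S} {f : ℕ → S} {θ : ℕ}

lemma hit_le {m : ℕ} (hm : 1 ≤ m) (hf : f m = i) : hit i f ≤ m :=
  sInf_le ⟨m, rfl, hm, hf⟩

lemma one_le_hit : 1 ≤ hit i f :=
  le_sInf fun _ ⟨_, hn, hm, _⟩ => hn ▸ by exact_mod_cast hm

lemma hit_le_coe_iff {n : ℕ} : hit i f ≤ n ↔ ∃ m, 1 ≤ m ∧ m ≤ n ∧ f m = i := by
  refine ⟨fun h => ?_, fun ⟨m, hm, hmn, hf⟩ =>
    (hit_le hm hf).trans (by exact_mod_cast hmn)⟩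
  by_contra! hno
  have hlb : ((n + 1 : ℕ) : ℕ∞) ≤ hit i f := le_sInf fun _ ⟨m, hm, h1, hf⟩ =>
    hm ▸ by exact_mod_cast (not_le.1 fun hmn => hno m h1 hmn hf)
  exact absurd (hlb.trans h) (by norm_cast; omega)

lemma coe_lt_hit_iff {n : ℕ} :
    (n : ℕ∞) < hit i f ↔ ∀ m, 1 ≤ m → m ≤ n → f m ≠ i := by
  simpa using hit_le_coe_iff.not

lemma hit_eq_add_hit_shift (h : (θ : ℕ∞) < hit i f) : hit i f = θ + hit i (shift θ f) := by
  refine le_antisymm ?_ (le_sInf fun _ ⟨m, hn, hm, hf⟩ => hn ▸ ?_)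
  · conv_rhs => rw [hit, ENat.add_sInf]
    refine le_iInf₂ fun _ ⟨m, hn, hm, hf⟩ => hn ▸ ?_
    exact_mod_cast hit_le (by omega : 1 ≤ θ + m) hf
  · have hθm : θ < m := not_le.1 fun hmθ => coe_lt_hit_iff.1 h m hm hmθ hf
    have hshift : shift θ f (m - θ) = i := by simpa [shift, Nat.add_sub_cancel' hθm.le] using hf
    calc (θ : ℕ∞) + hit i (shift θ f) ≤ θ + (m - θ : ℕ) := by
          gcongr; exact hit_le (by omega) hshift
      _ = m := by norm_cast; omega

lemma truncHit_le : truncHit i θ f ≤ θ :=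
  ENat.toNat_le_of_le_natCast (min_le_right _ _)

lemma one_le_truncHit (hθ : 1 ≤ θ) : 1 ≤ truncHit i θ f := by
  have hone : ((1 : ℕ) : ℕ∞) ≤ min (hit i f) θ := le_min one_le_hit (by exact_mod_cast hθ)
  have hfin : min (hit i f) θ ≠ ⊤ :=
    ne_top_of_le_ne_top (ENat.natCast_ne_top θ) (min_le_right _ _)
  simpa [truncHit] using ENat.toNat_le_toNat hone hfin

lemma toNat_hit_eq_truncHit_add (h : hit i f ≠ ⊤) :
    (hit i f).toNat =
      truncHit i θ f + if (θ : ℕ∞) < hit i f then (hit i (shift θ f)).toNat else 0 := by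
  rcases le_or_gt (hit i f) θ with hle | hlt
  · simp [truncHit, min_eq_left hle, not_lt.2 hle]
  · have hsplit := hit_eq_add_hit_shift hlt
    have hshift : hit i (shift θ f) ≠ ⊤ := fun htop => h (by simp [hsplit, htop])
    rw [if_pos hlt, truncHit, min_eq_right hlt.le, hsplit, ENat.toNat_add (by simp) hshift]

end ReturnTime

section Measurability

variable {S : Type*} [MeasurableSpace S]

lemma measurable_shift (θ : ℕ) : Measurable (shift θ : (ℕ → S) → ℕ → S) :=
  measurable_pi_lambda _ fun k => measurable_pi_apply (θ + k)

variable [MeasurableSingletonClass S]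

lemma measurableSet_eval_eq (m : ℕ) (a : S) : MeasurableSet {f : ℕ → S | f m = a} :=
  (measurable_pi_apply m : Measurable fun f : ℕ → S => f m) (measurableSet_singleton a)

lemma measurableSet_hit_le (i : S) (n : ℕ) : MeasurableSet {f : ℕ → S | hit i f ≤ n} := by
  have h : {f : ℕ → S | hit i f ≤ n} = ⋃ m ∈ Set.Icc 1 n, {f | f m = i} := by
    ext f; simp [hit_le_coe_iff, and_assoc]
  rw [h]
  exact .biUnion (to_countable _) fun m _ => measurableSet_eval_eq m i

lemma measurable_hit (i : S) : Measurable (hit i : (ℕ → S) → ℕ∞) := by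
  refine ENat.measurable_iff.2 fun n => ?_
  have hfiber :
      hit i ⁻¹' {(n : ℕ∞)} = {f | hit i f ≤ n} \ ⋃ m < n, {f | hit i f ≤ m} := by
    ext f
    simp only [Set.mem_preimage, mem_singleton_iff, mem_sdiff, mem_ofPred_eq, mem_iUnion,
      not_exists]
    generalize hit i f = x
    induction x using ENat.recTopCoe with
    | top => simp
    | coe k =>
      simp only [Nat.cast_inj, Nat.cast_le]
      exact ⟨fun h => ⟨h.le, fun m hm => h ▸ not_le.2 hm⟩,
        fun ⟨hle, hlt⟩ => le_antisymm hle (not_lt.1 fun hk => hlt k hk le_rfl)⟩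
  rw [hfiber]
  exact (measurableSet_hit_le i n).diff
    (.biUnion (to_countable _) fun m _ => measurableSet_hit_le i m)

lemma measurable_comp_hit {β : Type*} [MeasurableSpace β] (i : S) (g : ℕ∞ → β) :
    Measurable fun f : ℕ → S => g (hit i f) :=
  Measurable.of_discrete.comp (measurable_hit i)

lemma integral_natCast_comp_hit (i : S) (μ : Measure (ℕ → S)) (g : ℕ∞ → ℕ) :
    ∫ f, (g (hit i f) : ℝ) ∂μ = (∫⁻ f, (g (hit i f) : ℝ≥0∞) ∂μ).toReal := by
  rw [← integral_toReal (measurable_comp_hit i fun c => (g c : ℝ≥0∞)).aemeasurable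
    (ae_of_all _ fun _ => ENNReal.natCast_lt_top _)]
  simp only [ENNReal.toReal_natCast]

end Measurability

def cyl {S : Type*} (n : ℕ) (s : ℕ → S) : Set (ℕ → S) := {f | ∀ k ≤ n, f k = s k}

def cylinders (S : Type*) : Set (Set (ℕ → S)) := {A | ∃ n s, cyl n s = A}

def past {S : Type*} (n : ℕ) (f : ℕ → S) : Fin (n + 1) → S := fun k => f k

section Cylinders

open Fin.NatCast

variable {S : Type*}

lemma cyl_eq_preimage_past (n : ℕ) (s : ℕ → S) : cyl n s = past n ⁻¹' {past n s} := by
  ext f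
  simp only [cyl, mem_ofPred_eq, Set.mem_preimage, mem_singleton_iff, funext_iff, past]
  exact ⟨fun h k => h k (Nat.lt_succ_iff.1 k.2), fun h k hk => h ⟨k, Nat.lt_succ_of_le hk⟩⟩

lemma past_natCast (n : ℕ) (v : Fin (n + 1) → S) : past n (fun k => v (k : Fin (n + 1))) = v :=
  funext fun k => congrArg v (Fin.cast_val_eq_self k)

lemma cyl_subset_cyl {n m : ℕ} {s t : ℕ → S} (hnm : n ≤ m)
    (h : (cyl n s ∩ cyl m t).Nonempty) : cyl m t ⊆ cyl n s := by
  obtain ⟨g, hgs, hgt⟩ := h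
  intro f hf k hk
  rw [hf k (hk.trans hnm), ← hgt k (hk.trans hnm), hgs k hk]

lemma isPiSystem_cylinders : IsPiSystem (cylinders S) := by
  rintro _ ⟨n, s, rfl⟩ _ ⟨m, t, rfl⟩ hne
  rcases le_total n m with hnm | hmn
  · exact ⟨m, t, (inter_eq_right.2 (cyl_subset_cyl hnm hne)).symm⟩
  · exact ⟨n, s, (inter_eq_left.2 (cyl_subset_cyl hmn (inter_comm _ _ ▸ hne))).symm⟩

variable [MeasurableSpace S]

lemma measurable_past (n : ℕ) : Measurable (past n : (ℕ → S) → Fin (n + 1) → S) :=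
  measurable_pi_lambda _ fun k => measurable_pi_apply (k : ℕ)

variable [MeasurableSingletonClass S]

lemma measurableSet_cyl (n : ℕ) (s : ℕ → S) : MeasurableSet (cyl n s) := by
  rw [cyl_eq_preimage_past]
  exact measurable_past n (measurableSet_singleton _)

variable [Countable S]

lemma generateFrom_cylinders :
    (MeasurableSpace.pi : MeasurableSpace (ℕ → S)) =
      MeasurableSpace.generateFrom (cylinders S) := by
  refine le_antisymm (iSup_le fun m => measurable_iff_comap_le.1 fun A _ => ?_)
    (MeasurableSpace.generateFrom_le ?_)
  · have hA : (fun f : ℕ → S => f m) ⁻¹' A =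
        ⋃ (v : Fin (m + 1) → S) (_ : v (Fin.last m) ∈ A),
          cyl m (fun k => v (k : Fin (m + 1))) := by
      ext f
      simp only [Set.mem_preimage, mem_iUnion, cyl_eq_preimage_past, past_natCast,
        mem_singleton_iff, exists_prop]
      refine ⟨fun hf => ⟨past m f, hf, rfl⟩, ?_⟩
      rintro ⟨v, hv, rfl⟩
      exact hv
    rw [hA]
    exact .iUnion fun v => .iUnion fun _ =>
      MeasurableSpace.measurableSet_generateFrom ⟨m, _, rfl⟩
  · rintro _ ⟨n, s, rfl⟩
    exact measurableSet_cyl n s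

end Cylinders

namespace Chain

variable {S : Type*} [MeasurableSpace S] (C : Chain S)

instance (x : S) : IsProbabilityMeasure (C.μ x) := C.isProb x

lemma ERet_nonneg (x i : S) : 0 ≤ C.ERet x i :=
  integral_nonneg fun _ => Nat.cast_nonneg _

variable [MeasurableSingletonClass S]

lemma measure_eval_zero_of_ne {x y : S} (h : y ≠ x) : C.μ x {f | f 0 = y} = 0 :=
  measure_mono_null (fun f (hf : f 0 = y) (hx : f 0 = x) => h (hf ▸ hx))
    ((prob_compl_eq_zero_iff (measurableSet_eval_eq 0 x)).2 (C.start x))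

lemma measure_cyl (x : S) (n : ℕ) (s : ℕ → S) :
    C.μ x (cyl n s) =
      (if s 0 = x then 1 else 0) * ∏ k ∈ range n, C.trans (s k) (s (k + 1)) := by
  induction n with
  | zero =>
    have h0 : cyl 0 s = {f | f 0 = s 0} := by ext f; simp [cyl]
    split_ifs with hs
    · simp [h0, hs, C.start x]
    · simp [h0, C.measure_eval_zero_of_ne hs]
  | succ n ih =>
    rw [prod_range_succ, ← mul_assoc, ← ih]
    exact C.markov x n s

lemma measure_cyl_inter_preimage_shift (x : S) (θ n : ℕ) (s t : ℕ → S) :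
    C.μ x (cyl θ s ∩ shift θ ⁻¹' cyl n t) = C.μ x (cyl θ s) * C.μ (s θ) (cyl n t) := by
  by_cases hts : t 0 = s θ
  · set u : ℕ → S := fun k => if k < θ then s k else t (k - θ)
    have hu_le : ∀ k ≤ θ, u k = s k := fun k hk => by
      rcases hk.lt_or_eq with hk | rfl
      · simp [u, hk]
      · simp [u, hts]
    have hu_shift : ∀ k, u (θ + k) = t k := fun k => by simp [u]
    have hcyl : cyl θ s ∩ shift θ ⁻¹' cyl n t = cyl (θ + n) u := by
      ext f
      simp only [cyl, mem_inter_iff, Set.mem_preimage, mem_ofPred_eq, shift]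
      refine ⟨fun ⟨hs, ht⟩ k hk => ?_, fun h => ⟨fun k hk => ?_, fun k hk => ?_⟩⟩
      · rcases le_or_gt k θ with hkθ | hkθ
        · rw [hs k hkθ, hu_le k hkθ]
        · obtain ⟨j, rfl⟩ := Nat.exists_eq_add_of_lt hkθ
          rw [add_assoc, ht _ (by omega), hu_shift]
      · rw [h k (by omega), hu_le k hk]
      · rw [h _ (by omega), hu_shift]
    rw [hcyl, measure_cyl, measure_cyl, measure_cyl, if_pos hts, one_mul, prod_range_add,
      ← mul_assoc, hu_le 0 (Nat.zero_le _)]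
    congr 2
    · refine Finset.prod_congr rfl fun k hk => ?_
      rw [Finset.mem_range] at hk
      rw [hu_le k hk.le, hu_le (k + 1) hk]
    · ext k
      rw [hu_shift, add_assoc, hu_shift]
  · have hempty : cyl θ s ∩ shift θ ⁻¹' cyl n t = ∅ :=
      eq_empty_of_forall_notMem fun f ⟨hs, ht⟩ =>
        hts (by simpa [shift, hs θ le_rfl] using (ht 0 (Nat.zero_le n)).symm)
    simp [hempty, measure_cyl _ (s θ), hts]

lemma ERet_eq_toReal_lintegral (x i : S) :
    C.ERet x i = (∫⁻ f, ((hit i f).toNat : ℝ≥0∞) ∂C.μ x).toReal :=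
  integral_natCast_comp_hit i (C.μ x) ENat.toNat

lemma EThat_eq_toReal_lintegral (i : S) (θ : ℕ) :
    C.EThat i θ = (∫⁻ f, (truncHit i θ f : ℝ≥0∞) ∂C.μ i).toReal :=
  integral_natCast_comp_hit i (C.μ i) fun c => (min c θ).toNat

lemma one_le_EThat (i : S) {θ : ℕ} (hθ : 1 ≤ θ) : 1 ≤ C.EThat i θ := by
  have hint : Integrable (fun f => (truncHit i θ f : ℝ)) (C.μ i) :=
    .of_bound (measurable_comp_hit i fun c => ((min c θ).toNat : ℝ)).aestronglyMeasurable θ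
      (ae_of_all _ fun f => by simpa using truncHit_le)
  calc (1 : ℝ) = ∫ _, 1 ∂C.μ i := by simp
    _ ≤ C.EThat i θ :=
      integral_mono (integrable_const 1) hint fun f => Nat.one_le_cast.2 (one_le_truncHit hθ)

variable [Countable S]

theorem map_shift_restrict_of_subset_cyl (x q : S) {θ : ℕ} {B : Set (ℕ → S)}
    (hB : ∀ f ∈ B, cyl θ f ⊆ B) (hq : ∀ f ∈ B, f θ = q) :
    ((C.μ x).restrict B).map (shift θ) = C.μ x B • C.μ q := by
  set V := past θ '' B
  have hpast : past θ ⁻¹' V = B := by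
    refine (subset_preimage_image _ _).antisymm' ?_
    rintro f ⟨g, hg, hfg⟩
    exact hB g hg (by rw [cyl_eq_preimage_past]; exact hfg.symm)
  have hfib : ∀ v ∈ V, MeasurableSet (past θ ⁻¹' {v}) :=
    fun v _ => measurable_past θ (measurableSet_singleton v)
  refine ext_of_generate_finite (cylinders S) generateFrom_cylinders isPiSystem_cylinders ?_ ?_
  · rintro _ ⟨n, t, rfl⟩
    have hE := measurable_shift θ (measurableSet_cyl n t)
    rw [Measure.map_apply (measurable_shift θ) (measurableSet_cyl n t), Measure.restrict_apply hE,
      Measure.smul_apply, smul_eq_mul]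
    calc C.μ x (shift θ ⁻¹' cyl n t ∩ B)
        = ∑' v : V,
            C.μ x (past θ ⁻¹' {(v : Fin (θ + 1) → S)} ∩ shift θ ⁻¹' cyl n t) := by
          rw [← hpast, inter_comm, ← Measure.restrict_apply' hE,
            ← tsum_measure_preimage_singleton V.to_countable hfib]
          exact tsum_congr fun v => Measure.restrict_apply (hfib v v.2)
      _ = ∑' v : V, C.μ x (past θ ⁻¹' {(v : Fin (θ + 1) → S)}) * C.μ q (cyl n t) := by
          refine tsum_congr fun ⟨_, g, hg, hv⟩ => ?_
          subst hv
          rw [← cyl_eq_preimage_past, measure_cyl_inter_preimage_shift, hq g hg]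
      _ = C.μ x B * C.μ q (cyl n t) := by
          rw [ENNReal.tsum_mul_right, tsum_measure_preimage_singleton V.to_countable hfib, hpast]
  · simp [Measure.map_apply (measurable_shift θ) MeasurableSet.univ]

lemma lintegral_toNat_hit_eq (i : S) (θ : ℕ) (hfin : ∀ᵐ f ∂C.μ i, hit i f ≠ ⊤) :
    ∫⁻ f, ((hit i f).toNat : ℝ≥0∞) ∂C.μ i =
      ∫⁻ f, (truncHit i θ f : ℝ≥0∞) ∂C.μ i +
        ∑' q, C.μ i {f | f θ = q ∧ (θ : ℕ∞) < hit i f} *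
          ∫⁻ f, ((hit i f).toNat : ℝ≥0∞) ∂C.μ q := by
  set A : S → Set (ℕ → S) := fun q => {f | f θ = q ∧ (θ : ℕ∞) < hit i f}
  have hN : Measurable fun f : ℕ → S => ((hit i f).toNat : ℝ≥0∞) :=
    measurable_comp_hit i fun c => (c.toNat : ℝ≥0∞)
  have hTr : Measurable fun f : ℕ → S => (truncHit i θ f : ℝ≥0∞) :=
    measurable_comp_hit i fun c => ((min c θ).toNat : ℝ≥0∞)
  have hsurvive : MeasurableSet {f : ℕ → S | (θ : ℕ∞) < hit i f} :=
    measurable_hit i (.of_discrete : MeasurableSet (Ioi (θ : ℕ∞)))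
  have hA : ∀ q, MeasurableSet (A q) := fun q => (measurableSet_eval_eq θ q).inter hsurvive
  have hAdisj : Pairwise (Function.onFun Disjoint A) :=
    fun q q' hqq' => disjoint_left.2 fun f hf hf' => hqq' (hf.1.symm.trans hf'.1)
  have hAunion : ⋃ q, A q = {f | (θ : ℕ∞) < hit i f} := by ext f; simp [A]
  have hAmarkov : ∀ q, ((C.μ i).restrict (A q)).map (shift θ) = C.μ i (A q) • C.μ q :=
    fun q => C.map_shift_restrict_of_subset_cyl i q
      (fun f hf g hg => ⟨(hg θ le_rfl).trans hf.1,
        coe_lt_hit_iff.2 fun m h1 h2 => (hg m h2).symm ▸ coe_lt_hit_iff.1 hf.2 m h1 h2⟩)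
      (fun f hf => hf.1)
  calc ∫⁻ f, ((hit i f).toNat : ℝ≥0∞) ∂C.μ i
      = ∫⁻ f, (truncHit i θ f : ℝ≥0∞) +
          {f | (θ : ℕ∞) < hit i f}.indicator
            (fun f => ((hit i (shift θ f)).toNat : ℝ≥0∞)) f ∂C.μ i := by
        refine lintegral_congr_ae (hfin.mono fun f hf => ?_)
        simp only [toNat_hit_eq_truncHit_add (θ := θ) hf, indicator_apply, mem_ofPred_eq]
        split_ifs <;> simp
    _ = ∫⁻ f, (truncHit i θ f : ℝ≥0∞) ∂C.μ i +
          ∑' q, ∫⁻ f in A q, ((hit i (shift θ f)).toNat : ℝ≥0∞) ∂C.μ i := by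
        rw [lintegral_add_left hTr,
          lintegral_indicator hsurvive, ← hAunion, lintegral_iUnion hA hAdisj]
    _ = _ := by
        congr 1
        refine tsum_congr fun q => ?_
        rw [← lintegral_map hN (measurable_shift θ), hAmarkov, lintegral_smul_measure,
          smul_eq_mul]

lemma ERet_self_eq_EThat_add_tsum (hrec : C.PositiveRecurrent) (i : S) (θ : ℕ) :
    C.ERet i i = C.EThat i θ +
      ∑' q, (C.μ i {f | f θ = q ∧ (θ : ℕ∞) < hit i f}).toReal * C.ERet q i := by
  have hfin : ∀ᵐ f ∂C.μ i, hit i f ≠ ⊤ := measure_eq_zero_iff_ae_notMem.1 (hrec i).1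
  have hdecomp := C.lintegral_toNat_hit_eq i θ hfin
  have hL : ∫⁻ f, ((hit i f).toNat : ℝ≥0∞) ∂C.μ i ≠ ⊤ := by
    simpa using ((hrec i).2.lintegral_lt_top).ne
  rw [hdecomp, ENNReal.add_ne_top] at hL
  rw [ERet_eq_toReal_lintegral, EThat_eq_toReal_lintegral, hdecomp, ENNReal.toReal_add hL.1 hL.2,
    ENNReal.tsum_toReal_eq (ENNReal.ne_top_of_tsum_ne_top hL.2)]
  simp only [ENNReal.toReal_mul, ERet_eq_toReal_lintegral]

end Chain

theorem statement6_general {S : Type*} [MeasurableSpace S] [MeasurableSingletonClass S] [Countable S]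
    (C : Chain S) (hrec : C.PositiveRecurrent)
    (i : S) (θ : ℕ) (hθ : 1 ≤ θ) :
    (C.EThat i θ)⁻¹ - C.statPi i =
      C.statPi i / C.EThat i θ *
        ∑' q : {q : S // q ≠ i},
          (C.μ i {f | f θ = (q : S) ∧ (θ : ℕ∞) < hit i f}).toReal * C.ERet (q : S) i := by
  have hsupp : Function.support
      (fun q => (C.μ i {f | f θ = q ∧ (θ : ℕ∞) < hit i f}).toReal * C.ERet q i) ⊆
        {q | q ≠ i} := by
    rintro q hq rfl
    have hempty : {f : ℕ → S | f θ = q ∧ (θ : ℕ∞) < hit q f} = ∅ :=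
      eq_empty_of_forall_notMem fun f ⟨hf, hlt⟩ => coe_lt_hit_iff.1 hlt θ hθ le_rfl hf
    simp [hempty] at hq
  have hsub : ∑' q : {q : S // q ≠ i},
      (C.μ i {f | f θ = (q : S) ∧ (θ : ℕ∞) < hit i f}).toReal * C.ERet (q : S) i =
      ∑' q, (C.μ i {f | f θ = q ∧ (θ : ℕ∞) < hit i f}).toReal * C.ERet q i :=
    tsum_subtype_eq_of_support_subset hsupp
  rw [hsub, Chain.statPi, C.ERet_self_eq_EThat_add_tsum hrec i θ]
  have hÊ : 0 < C.EThat i θ := zero_lt_one.trans_le (C.one_le_EThat i hθ)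
  have hT : 0 ≤ ∑' q, (C.μ i {f | f θ = q ∧ (θ : ℕ∞) < hit i f}).toReal * C.ERet q i :=
    tsum_nonneg fun q => mul_nonneg ENNReal.toReal_nonneg (C.ERet_nonneg q i)
  field_simp
  ring

/-- Lemma 9 of the paper, rewritten via `Z_ii − Z_qi = π_i E_q[T_i]`.
With `Ê = E_i[min(T_i, θ)]`,
`1/Ê − π_i = (π_i/Ê) · Σ_{q ≠ i} P_i(X_θ = q, T_i > θ) · E_q[T_i]`. -/
theorem statement6 {S : Type*} [MeasurableSpace S] [MeasurableSingletonClass S] [Countable S]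
    (C : Chain S) (hirr : C.Irreducible) (hrec : C.PositiveRecurrent)
    (i : S) (θ : ℕ) (hθ : 1 ≤ θ) :
    (C.EThat i θ)⁻¹ - C.statPi i =
      C.statPi i / C.EThat i θ *
        ∑' q : {q : S // q ≠ i},
          (C.μ i {f | f θ = (q : S) ∧ (θ : ℕ∞) < hit i f}).toReal * C.ERet (q : S) i :=
  statement6_general C hrec i θ hθ

end

end LocalStationary
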